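/- arXiv:2509.21809 — 3 statements merged into one kernel-verified Lean document; each statement's English description precedes it below -/
import Mathlib

section
/- Let f, ξ₁, ξ₂, ξ₃ be arbitrary real numbers and let g be the 3×3 real matrix with rows (0,0,1), (0,−1,0), (1,0,f). Then there is no 3×3 real matrix φ such that ξᵀ·g·ξ = 1 (where ξ = (ξ₁,ξ₂,ξ₃)ᵀ), φᵀ·g = −g·φ, and φ² = I₃ − ξ·(gξ)ᵀ. (Theorem 3.1, case ε = −1: there exist no almost paracontact metric structures on a 3-dimensional Walker manifold whose metric has ε = −1.) -/
/-!
Since `g φ` is skew-symmetric, `φ` is `g`-skew-adjoint, and `φ² = I - ξ ηᵀ` becomes the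
compatibility identity `g(φx, φx) = -g(x, x) + η(x)²`. Skewness also forces
`φ e₁ = (φ₁₁, φ₂₁, 0)` and `φ e₂ = (φ₁₂, 0, φ₂₁)`. At the null vector `e₁` the identity reads
`-φ₂₁² = ξ₃²`, so `φ₂₁ = 0`; but then `g(φ e₂, φ e₂) = 0`, whereas the identity at `e₂`
demands `1 + ξ₂²`.
-/

open Matrix

theorem Matrix.dotProduct_mulVec_mulVec_eq_of_paracontact {n R : Type*} [Fintype n]
    [DecidableEq n] [CommRing R] {g φ : Matrix n n R} {ξ : n → R} (hg : g.IsSymm)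
    (hskew : φᵀ * g = -(g * φ)) (hsq : φ * φ = 1 - vecMulVec ξ (g *ᵥ ξ)) (x : n → R) :
    φ *ᵥ x ⬝ᵥ g *ᵥ (φ *ᵥ x) = -(x ⬝ᵥ g *ᵥ x) + (x ⬝ᵥ g *ᵥ ξ) ^ 2 := by
  have hη : g *ᵥ ξ ⬝ᵥ x = x ⬝ᵥ g *ᵥ ξ := by
    rw [dotProduct_comm, dotProduct_mulVec, ← mulVec_transpose, hg.eq]
  calc φ *ᵥ x ⬝ᵥ g *ᵥ (φ *ᵥ x) = x ⬝ᵥ (φᵀ * g * φ) *ᵥ x := by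
        rw [← vecMul_transpose, dotProduct_mulVec, vecMul_vecMul, vecMul_transpose,
          ← dotProduct_mulVec, mulVec_mulVec]
    _ = -(x ⬝ᵥ g *ᵥ ((φ * φ) *ᵥ x)) := by
        rw [hskew, Matrix.neg_mul, Matrix.mul_assoc, neg_mulVec, dotProduct_neg, mulVec_mulVec]
    _ = -(x ⬝ᵥ g *ᵥ x) + (x ⬝ᵥ g *ᵥ ξ) ^ 2 := by
        rw [hsq, sub_mulVec, one_mulVec, vecMulVec_mulVec, mulVec_sub, dotProduct_sub,
          mulVec_smul, dotProduct_smul, hη, op_smul_eq_smul, smul_eq_mul]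
        ring

def walkerMetric (f : ℝ) : Matrix (Fin 3) (Fin 3) ℝ := !![0, 0, 1; 0, -1, 0; 1, 0, f]

theorem walkerMetric_isSymm (f : ℝ) : (walkerMetric f).IsSymm := by
  ext i j
  fin_cases i <;> fin_cases j <;> rfl

theorem dotProduct_walkerMetric_mulVec (f : ℝ) (v w : Fin 3 → ℝ) :
    v ⬝ᵥ walkerMetric f *ᵥ w = v 0 * w 2 + v 2 * w 0 - v 1 * w 1 + f * v 2 * w 2 := by
  simp [walkerMetric, dotProduct, Fin.sum_univ_three, mulVec]
  ring

theorem entries_of_transpose_mul_walkerMetric {f : ℝ} {φ : Matrix (Fin 3) (Fin 3) ℝ}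
    (h : φᵀ * walkerMetric f = -(walkerMetric f * φ)) :
    φ 2 0 = 0 ∧ φ 1 1 = 0 ∧ φ 2 1 = φ 1 0 := by
  have h00 := congrFun₂ h 0 0
  have h11 := congrFun₂ h 1 1
  have h10 := congrFun₂ h 1 0
  simp only [walkerMetric, Fin.isValue, mul_apply, transpose_apply, of_apply, cons_val',
    cons_val_zero, cons_val_fin_one, Fin.sum_univ_three, mul_zero, cons_val_one, add_zero, cons_val,
    mul_one, zero_add, cons_mul, Nat.succ_eq_add_one, Nat.reduceAdd, empty_mul,
    Equiv.symm_apply_apply, Matrix.neg_apply, vecMul, dotProduct, zero_mul, one_mul, neg_mul,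
    mul_neg, neg_neg] at h00 h11 h10
  exact ⟨by linarith, by linarith, h10⟩

/-- Theorem 3.1, case `ε = -1`: there exist no almost paracontact metric structures on
a 3-dimensional Walker manifold whose metric is `g = [[0,0,1],[0,-1,0],[1,0,f]]`. -/
theorem no_apcm_structure_eps_neg (f ξ₁ ξ₂ ξ₃ : ℝ) :
    ¬ ∃ φ : Matrix (Fin 3) (Fin 3) ℝ,
      ![ξ₁, ξ₂, ξ₃] ⬝ᵥ (!![0, 0, 1; 0, -1, 0; 1, 0, f]).mulVec ![ξ₁, ξ₂, ξ₃] = 1 ∧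
      φᵀ * !![0, 0, 1; 0, -1, 0; 1, 0, f] = -(!![0, 0, 1; 0, -1, 0; 1, 0, f] * φ) ∧
      φ * φ = 1 - Matrix.vecMulVec ![ξ₁, ξ₂, ξ₃]
        ((!![0, 0, 1; 0, -1, 0; 1, 0, f]).mulVec ![ξ₁, ξ₂, ξ₃]) := by
  rintro ⟨φ, -, hskew, hsq⟩
  have compat := dotProduct_mulVec_mulVec_eq_of_paracontact (walkerMetric_isSymm f) hskew hsq
  simp only [dotProduct_walkerMetric_mulVec] at compat
  obtain ⟨h20, h11, h21⟩ := entries_of_transpose_mul_walkerMetric hskew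
  have at_e₁ : -(φ 1 0 * φ 1 0) = ξ₃ ^ 2 := by
    simpa [mulVec, dotProduct, Fin.sum_univ_three, h20] using compat ![1, 0, 0]
  have h10 : φ 1 0 = 0 := by nlinarith [sq_nonneg ξ₃]
  have at_e₂ : (0 : ℝ) = 1 + ξ₂ ^ 2 := by
    simpa [mulVec, dotProduct, Fin.sum_univ_three, h11, h21, h10]
      using compat ![0, 1, 0]
  linarith [sq_nonneg ξ₂]
end

section
/- Let f : ℝ³ → ℝ be smooth with f > 0 everywhere, and consider the almost paracontact metric Walker structure with ξ₁ ≡ 0, ξ₂ ≡ 0, ξ₃ = 1/√f (so the constraint f ξ₃² = 1 holds, η = (1/√f)dx + √f dz, φ∂x = (1/√f)∂y, φ∂y = √f ∂x − (1/√f)∂z, φ∂z = 0, and Φ(∂x,∂y) = 1/√f, Φ(∂x,∂z) = Φ(∂y,∂z) = 0). Then: (a) the structure is almost α-paracosymplectic — i.e. dη(∂i,∂j) = 0 everywhere for all i,j and there exists a smooth nowhere-vanishing function α : ℝ³ → ℝ with dΦ(∂x,∂y,∂z) = 2α·(η∧Φ)(∂x,∂y,∂z) everywhere — if and only if f_y ≡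 0 and f_z = −f f_x with f_z vanishing nowhere; (b) there is no nonzero real constant α such that dη = 0 and dΦ = 2α η∧Φ hold everywhere (the structure is never almost α-para-Kenmotsu). (Theorem 4.3(ii).) -/
open Real

/-- Points of the Walker manifold `M = ℝ³` with coordinates `(x,y,z)`. -/
abbrev Pt : Type := ℝ × ℝ × ℝ

/-- Vector fields on `ℝ³`, given by their components in the frame `∂x, ∂y, ∂z`. -/
abbrev VF : Type := Pt → Pt

/-- Partial derivative ∂/∂x. -/
noncomputable def pdx (F : Pt → ℝ) (p : Pt) : ℝ := fderiv ℝ F p ((1:ℝ), (0:ℝ), (0:ℝ))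

/-- Partial derivative ∂/∂y. -/
noncomputable def pdy (F : Pt → ℝ) (p : Pt) : ℝ := fderiv ℝ F p ((0:ℝ), (1:ℝ), (0:ℝ))

/-- Partial derivative ∂/∂z. -/
noncomputable def pdz (F : Pt → ℝ) (p : Pt) : ℝ := fderiv ℝ F p ((0:ℝ), (0:ℝ), (1:ℝ))

/-- Directional derivative of a scalar function along a vector field. -/
noncomputable def dd (X : VF) (F : Pt → ℝ) (p : Pt) : ℝ := fderiv ℝ F p (X p)

/-- Components of a tangent vector. -/
def c1 (v : Pt) : ℝ := v.1
def c2 (v : Pt) : ℝ := v.2.1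
def c3 (v : Pt) : ℝ := v.2.2

/-- The coordinate vector fields `∂x, ∂y, ∂z`. -/
noncomputable def E : Fin 3 → VF :=
  ![fun _ => ((1:ℝ), (0:ℝ), (0:ℝ)), fun _ => ((0:ℝ), (1:ℝ), (0:ℝ)),
    fun _ => ((0:ℝ), (0:ℝ), (1:ℝ))]

/-- The Walker metric with `ε = 1`: `g(∂x,∂z) = g(∂z,∂x) = 1`, `g(∂y,∂y) = 1`,
`g(∂z,∂z) = f`, all other components zero. -/
noncomputable def gm (f : Pt → ℝ) (X Y : VF) (p : Pt) : ℝ :=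
  c1 (X p) * c3 (Y p) + c3 (X p) * c1 (Y p) + c2 (X p) * c2 (Y p)
    + f p * c3 (X p) * c3 (Y p)

/-- The Levi-Civita connection of the Walker metric:
`∇_{∂x}∂z = ∇_{∂z}∂x = (1/2) f_x ∂x`, `∇_{∂y}∂z = ∇_{∂z}∂y = (1/2) f_y ∂x`,
`∇_{∂z}∂z = (1/2)(f f_x + f_z) ∂x - (1/2) f_y ∂y - (1/2) f_x ∂z`, all other covariant
derivatives of coordinate fields zero, extended by `C^∞`-linearity below and the
Leibniz rule above. -/
noncomputable def cov (f : Pt → ℝ) (X Y : VF) : VF := fun p =>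
  ( dd X (fun q => c1 (Y q)) p
      + (1/2) * pdx f p * (c1 (X p) * c3 (Y p) + c3 (X p) * c1 (Y p))
      + (1/2) * pdy f p * (c2 (X p) * c3 (Y p) + c3 (X p) * c2 (Y p))
      + (1/2) * (f p * pdx f p + pdz f p) * (c3 (X p) * c3 (Y p)),
    dd X (fun q => c2 (Y q)) p - (1/2) * pdy f p * (c3 (X p) * c3 (Y p)),
    dd X (fun q => c3 (Y q)) p - (1/2) * pdx f p * (c3 (X p) * c3 (Y p)) )

/-- Lie bracket of vector fields on `ℝ³`. -/
noncomputable def brk (X Y : VF) : VF := fun p =>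
  ( dd X (fun q => c1 (Y q)) p - dd Y (fun q => c1 (X q)) p,
    dd X (fun q => c2 (Y q)) p - dd Y (fun q => c2 (X q)) p,
    dd X (fun q => c3 (Y q)) p - dd Y (fun q => c3 (X q)) p )

/-- The `(1,1)`-tensor `φ` of the almost paracontact metric Walker structure:
`φ∂x = -ξ₂∂x + ξ₃∂y`, `φ∂y = (ξ₁ + fξ₃)∂x - ξ₃∂z`, `φ∂z = -fξ₂∂x - ξ₁∂y + ξ₂∂z`. -/
noncomputable def phiV (f ξ₁ ξ₂ ξ₃ : Pt → ℝ) (X : VF) : VF := fun p =>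
  ( -ξ₂ p * c1 (X p) + (ξ₁ p + f p * ξ₃ p) * c2 (X p) - f p * ξ₂ p * c3 (X p),
    ξ₃ p * c1 (X p) - ξ₁ p * c3 (X p),
    -ξ₃ p * c2 (X p) + ξ₂ p * c3 (X p) )

/-- The 1-form `η = ξ₃ dx + ξ₂ dy + (ξ₁ + fξ₃) dz`. -/
noncomputable def etaV (f ξ₁ ξ₂ ξ₃ : Pt → ℝ) (X : VF) (p : Pt) : ℝ :=
  ξ₃ p * c1 (X p) + ξ₂ p * c2 (X p) + (ξ₁ p + f p * ξ₃ p) * c3 (X p)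

/-- The structure tensor `F(X,Y,Z) = g((∇_X φ)Y, Z)`, `(∇_X φ)Y = ∇_X(φY) - φ(∇_X Y)`. -/
noncomputable def Ften (f ξ₁ ξ₂ ξ₃ : Pt → ℝ) (X Y Z : VF) (p : Pt) : ℝ :=
  gm f (fun q => cov f X (phiV f ξ₁ ξ₂ ξ₃ Y) q - phiV f ξ₁ ξ₂ ξ₃ (cov f X Y) q) Z p

/-- The fundamental 2-form `Φ(X,Y) = g(φX, Y)`. -/
noncomputable def Phi2 (f ξ₁ ξ₂ ξ₃ : Pt → ℝ) (X Y : VF) : Pt → ℝ :=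
  gm f (phiV f ξ₁ ξ₂ ξ₃ X) Y

/-- `dη(∂i,∂j) = (1/2)(∂i(η(∂j)) - ∂j(η(∂i)))` on coordinate fields. -/
noncomputable def deta (f ξ₁ ξ₂ ξ₃ : Pt → ℝ) (i j : Fin 3) (p : Pt) : ℝ :=
  (1/2) * (dd (E i) (etaV f ξ₁ ξ₂ ξ₃ (E j)) p - dd (E j) (etaV f ξ₁ ξ₂ ξ₃ (E i)) p)

/-- `dη(X,Y) = (1/2)(X(η(Y)) - Y(η(X)) - η([X,Y]))` on general vector fields. -/
noncomputable def detaB (f ξ₁ ξ₂ ξ₃ : Pt → ℝ) (X Y : VF) (p : Pt) : ℝ :=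
  (1/2) * (dd X (etaV f ξ₁ ξ₂ ξ₃ Y) p - dd Y (etaV f ξ₁ ξ₂ ξ₃ X) p
    - etaV f ξ₁ ξ₂ ξ₃ (brk X Y) p)

/-- The Nijenhuis tensor `N(X,Y) = φ²[X,Y] + [φX,φY] - φ[φX,Y] - φ[X,φY]`. -/
noncomputable def nij (f ξ₁ ξ₂ ξ₃ : Pt → ℝ) (X Y : VF) : VF := fun p =>
  phiV f ξ₁ ξ₂ ξ₃ (phiV f ξ₁ ξ₂ ξ₃ (brk X Y)) p
    + brk (phiV f ξ₁ ξ₂ ξ₃ X) (phiV f ξ₁ ξ₂ ξ₃ Y) p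
    - phiV f ξ₁ ξ₂ ξ₃ (brk (phiV f ξ₁ ξ₂ ξ₃ X) Y) p
    - phiV f ξ₁ ξ₂ ξ₃ (brk X (phiV f ξ₁ ξ₂ ξ₃ Y)) p

/-- The curvature tensor, with the paper's sign convention
`R(X,Y)Z = ∇_{[X,Y]}Z - ∇_X∇_Y Z + ∇_Y∇_X Z`. -/
noncomputable def Rop (f : Pt → ℝ) (X Y Z : VF) : VF := fun p =>
  cov f (brk X Y) Z p - cov f X (cov f Y Z) p + cov f Y (cov f X Z) p

/-- Second partial derivatives of `f`. -/
noncomputable def fxx (f : Pt → ℝ) : Pt → ℝ := pdx (pdx f)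
noncomputable def fxy (f : Pt → ℝ) : Pt → ℝ := pdy (pdx f)
noncomputable def fyy (f : Pt → ℝ) : Pt → ℝ := pdy (pdy f)

/-- The Ricci tensor of the Walker metric: `ρ(∂x,∂z) = ρ(∂z,∂x) = (1/2) f_xx`,
`ρ(∂y,∂z) = ρ(∂z,∂y) = (1/2) f_xy`, `ρ(∂z,∂z) = (1/2)(f f_xx - f_yy)`, all other
components zero, extended tensorially. -/
noncomputable def rhoT (f : Pt → ℝ) (X Y : VF) (p : Pt) : ℝ :=
  (1/2) * fxx f p * (c1 (X p) * c3 (Y p) + c3 (X p) * c1 (Y p))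
    + (1/2) * fxy f p * (c2 (X p) * c3 (Y p) + c3 (X p) * c2 (Y p))
    + (1/2) * (f p * fxx f p - fyy f p) * (c3 (X p) * c3 (Y p))

/-- The Ricci operator: `Q∂x = (1/2)f_xx ∂x`, `Q∂y = (1/2)f_xy ∂x`,
`Q∂z = -(1/2)f_yy ∂x + (1/2)f_xy ∂y + (1/2)f_xx ∂z`. -/
noncomputable def Qop (f : Pt → ℝ) (X : VF) : VF := fun p =>
  ( (1/2) * fxx f p * c1 (X p) + (1/2) * fxy f p * c2 (X p) - (1/2) * fyy f p * c3 (X p),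
    (1/2) * fxy f p * c3 (X p),
    (1/2) * fxx f p * c3 (X p) )

/-- `dΦ(∂x,∂y,∂z) = ∂x(Φ(∂y,∂z)) - ∂y(Φ(∂x,∂z)) + ∂z(Φ(∂x,∂y))`. -/
noncomputable def dPhi (f ξ₁ ξ₂ ξ₃ : Pt → ℝ) (p : Pt) : ℝ :=
  pdx (Phi2 f ξ₁ ξ₂ ξ₃ (E 1) (E 2)) p - pdy (Phi2 f ξ₁ ξ₂ ξ₃ (E 0) (E 2)) p
    + pdz (Phi2 f ξ₁ ξ₂ ξ₃ (E 0) (E 1)) p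

/-- `(η∧Φ)(∂x,∂y,∂z) = η(∂x)Φ(∂y,∂z) - η(∂y)Φ(∂x,∂z) + η(∂z)Φ(∂x,∂y)`. -/
noncomputable def etaWedgePhi (f ξ₁ ξ₂ ξ₃ : Pt → ℝ) (p : Pt) : ℝ :=
  etaV f ξ₁ ξ₂ ξ₃ (E 0) p * Phi2 f ξ₁ ξ₂ ξ₃ (E 1) (E 2) p
    - etaV f ξ₁ ξ₂ ξ₃ (E 1) p * Phi2 f ξ₁ ξ₂ ξ₃ (E 0) (E 2) p
    + etaV f ξ₁ ξ₂ ξ₃ (E 2) p * Phi2 f ξ₁ ξ₂ ξ₃ (E 0) (E 1) p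

/-- The constant function `0`. -/
noncomputable def zeroF : Pt → ℝ := fun _ => 0
/-- The constant function `1`. -/
noncomputable def oneF : Pt → ℝ := fun _ => 1
/-- The constant function `-1`. -/
noncomputable def negOneF : Pt → ℝ := fun _ => -1

/-- The coordinate `ξ₃ = 1/√f` of the structure of Theorem 4.3. -/
noncomputable def xi3s (f : Pt → ℝ) : Pt → ℝ := fun p => 1 / Real.sqrt (f p)

/-! With `ξ₁ = ξ₂ = 0` and `ξ₃ = 1/√f` one has `η = ξ₃ dx + √f dz` and `Φ = ξ₃ dx ∧ dy`, so
`η ∧ Φ = 1` and `dΦ = ∂_z ξ₃ = -f_z / (2 f √f)`. The components of `dη` are `f_y / (4 f √f)`,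
`(f f_x + f_z) / (4 f √f)` and `f_y / (4 √f)`, hence `dη = 0` iff `f_y = 0` and `f_z = -f f_x`,
while `dΦ = 2α η ∧ Φ` forces `α = ∂_z ξ₃ / 2`, smooth and vanishing exactly where `f_z` does.
A nonzero constant `α` would make `ξ₃` affine with nonzero slope along every `z`-line, so `ξ₃`
would vanish somewhere, contradicting `ξ₃ > 0`. -/

section OneDivSqrt

variable {V : Type*} [NormedAddCommGroup V] [NormedSpace ℝ V] {f : V → ℝ} {f' : StrongDual ℝ V}
  {x : V}

theorem HasFDerivAt.one_div_sqrt (hf : HasFDerivAt f f' x) (hx : 0 < f x) :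
    HasFDerivAt (fun y => 1 / √(f y)) ((-1 / (2 * f x * √(f x))) • f') x := by
  have hs : √(f x) ≠ 0 := (Real.sqrt_pos.2 hx).ne'
  have h := ((Real.hasDerivAt_sqrt hx.ne').inv hs).comp_hasFDerivAt x hf
  have hcoef : -(1 / (2 * √(f x))) / √(f x) ^ 2 = -1 / (2 * f x * √(f x)) := by
    rw [Real.sq_sqrt hx.le]
    field_simp
  rw [hcoef] at h
  exact h.congr_of_eventuallyEq (.of_forall fun y => by simp)

theorem fderiv_one_div_sqrt_apply (hf : DifferentiableAt ℝ f x) (hx : 0 < f x) (v : V) :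
    fderiv ℝ (fun y => 1 / √(f y)) x v = -fderiv ℝ f x v / (2 * f x * √(f x)) := by
  rw [(hf.hasFDerivAt.one_div_sqrt hx).fderiv, FunLike.coe_smul, Pi.smul_apply, smul_eq_mul]
  ring

theorem fderiv_sqrt_apply (hf : DifferentiableAt ℝ f x) (hx : f x ≠ 0) (v : V) :
    fderiv ℝ (fun y => √(f y)) x v = fderiv ℝ f x v / (2 * √(f x)) := by
  rw [fderiv_sqrt hf hx, FunLike.coe_smul, Pi.smul_apply, smul_eq_mul]
  ring

end OneDivSqrt

theorem ContDiff.pdz {F : Pt → ℝ} {m n : WithTop ℕ∞} (hF : ContDiff ℝ n F) (hmn : m + 1 ≤ n) :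
    ContDiff ℝ m (pdz F) :=
  (hF.fderiv_right hmn).clm_apply contDiff_const

theorem DifferentiableAt.hasDerivAt_pdz {F : Pt → ℝ} {x y t : ℝ}
    (hF : DifferentiableAt ℝ F (x, y, t)) :
    HasDerivAt (fun s => F (x, y, s)) (pdz F (x, y, t)) t :=
  hF.hasFDerivAt.comp_hasDerivAt t
    ((hasDerivAt_const t x).prodMk ((hasDerivAt_const t y).prodMk (hasDerivAt_id t)))

theorem exists_eq_zero_of_hasDerivAt_const {h : ℝ → ℝ} {c : ℝ} (hc : c ≠ 0)
    (hh : ∀ t, HasDerivAt h c t) : ∃ t, h t = 0 := by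
  have hline : ∀ t, HasDerivAt (fun s => h s - c * s) 0 t := fun t => by
    simpa using (hh t).fun_sub ((hasDerivAt_id' t).const_mul c)
  have haffine : ∀ t, h t - c * t = h 0 - c * 0 := fun t =>
    is_const_of_deriv_eq_zero (fun s => (hline s).differentiableAt) (fun s => (hline s).deriv) t 0
  refine ⟨-h 0 / c, ?_⟩
  have := haffine (-h 0 / c)
  rw [mul_div_cancel₀ _ hc] at this
  linarith

theorem pdx_zero (p : Pt) : pdx 0 p = 0 := by
  simp [pdx]

theorem pdz_zero (p : Pt) : pdz 0 p = 0 := by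
  simp [pdz]

theorem dd_E_zero (F : Pt → ℝ) (p : Pt) : dd (E 0) F p = pdx F p := rfl

theorem dd_E_one (F : Pt → ℝ) (p : Pt) : dd (E 1) F p = pdy F p := rfl

theorem dd_E_two (F : Pt → ℝ) (p : Pt) : dd (E 2) F p = pdz F p := rfl

section Deta

variable {f ξ₁ ξ₂ ξ₃ : Pt → ℝ} {p : Pt}

theorem deta_self (i : Fin 3) : deta f ξ₁ ξ₂ ξ₃ i i p = 0 := by
  simp [deta]

theorem deta_swap (i j : Fin 3) : deta f ξ₁ ξ₂ ξ₃ j i p = -deta f ξ₁ ξ₂ ξ₃ i j p := by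
  simp only [deta]
  ring

theorem forall_deta_eq_zero_iff :
    (∀ i j, deta f ξ₁ ξ₂ ξ₃ i j p = 0) ↔
      deta f ξ₁ ξ₂ ξ₃ 0 1 p = 0 ∧ deta f ξ₁ ξ₂ ξ₃ 0 2 p = 0 ∧ deta f ξ₁ ξ₂ ξ₃ 1 2 p = 0 := by
  refine ⟨fun h => ⟨h 0 1, h 0 2, h 1 2⟩, fun ⟨h01, h02, h12⟩ i j => ?_⟩
  fin_cases i <;> fin_cases j <;>
    simp [deta_self, deta_swap 0 1, deta_swap 0 2, deta_swap 1 2, h01, h02, h12]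

theorem deta_zero_one : deta f ξ₁ ξ₂ ξ₃ 0 1 p =
    (pdx (etaV f ξ₁ ξ₂ ξ₃ (E 1)) p - pdy (etaV f ξ₁ ξ₂ ξ₃ (E 0)) p) / 2 := by
  simp only [deta, dd_E_zero, dd_E_one]
  ring

theorem deta_zero_two : deta f ξ₁ ξ₂ ξ₃ 0 2 p =
    (pdx (etaV f ξ₁ ξ₂ ξ₃ (E 2)) p - pdz (etaV f ξ₁ ξ₂ ξ₃ (E 0)) p) / 2 := by
  simp only [deta, dd_E_zero, dd_E_two]
  ring

theorem deta_one_two : deta f ξ₁ ξ₂ ξ₃ 1 2 p =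
    (pdy (etaV f ξ₁ ξ₂ ξ₃ (E 2)) p - pdz (etaV f ξ₁ ξ₂ ξ₃ (E 1)) p) / 2 := by
  simp only [deta, dd_E_one, dd_E_two]
  ring

end Deta

section Xi3s

variable {f : Pt → ℝ} {p : Pt}

theorem etaV_xi3s_E_zero : etaV f zeroF zeroF (xi3s f) (E 0) = xi3s f := by
  funext q
  simp [etaV, zeroF, E, c1, c2, c3]

theorem etaV_xi3s_E_one : etaV f zeroF zeroF (xi3s f) (E 1) = 0 := by
  funext q
  simp [etaV, zeroF, E, c1, c2, c3]

theorem etaV_xi3s_E_two : etaV f zeroF zeroF (xi3s f) (E 2) = fun q => √(f q) := by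
  funext q
  simp [etaV, zeroF, E, c1, c2, c3, xi3s, ← div_eq_mul_inv, Real.div_sqrt]

theorem Phi2_xi3s_E_one_E_two : Phi2 f zeroF zeroF (xi3s f) (E 1) (E 2) = 0 := by
  funext q
  simp [Phi2, gm, phiV, zeroF, E, c1, c2, c3]

theorem Phi2_xi3s_E_zero_E_two : Phi2 f zeroF zeroF (xi3s f) (E 0) (E 2) = 0 := by
  funext q
  simp [Phi2, gm, phiV, zeroF, E, c1, c2, c3]

theorem Phi2_xi3s_E_zero_E_one : Phi2 f zeroF zeroF (xi3s f) (E 0) (E 1) = xi3s f := by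
  funext q
  simp [Phi2, gm, phiV, zeroF, E, c1, c2, c3, xi3s]

theorem dPhi_xi3s : dPhi f zeroF zeroF (xi3s f) = pdz (xi3s f) := by
  funext q
  simp [dPhi, Phi2_xi3s_E_one_E_two, Phi2_xi3s_E_zero_E_two, Phi2_xi3s_E_zero_E_one, pdx, pdy]

theorem etaWedgePhi_xi3s (hp : 0 < f p) : etaWedgePhi f zeroF zeroF (xi3s f) p = 1 := by
  simp [etaWedgePhi, etaV_xi3s_E_two, Phi2_xi3s_E_one_E_two, Phi2_xi3s_E_zero_E_two,
    Phi2_xi3s_E_zero_E_one, xi3s, (Real.sqrt_pos.2 hp).ne']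

theorem dPhi_xi3s_eq_two_mul_etaWedgePhi_iff (hp : 0 < f p) (a : ℝ) :
    dPhi f zeroF zeroF (xi3s f) p = 2 * a * etaWedgePhi f zeroF zeroF (xi3s f) p ↔
      pdz (xi3s f) p = 2 * a := by
  rw [dPhi_xi3s, etaWedgePhi_xi3s hp, mul_one]

theorem fderiv_xi3s_apply (hf : DifferentiableAt ℝ f p) (hp : 0 < f p) (v : Pt) :
    fderiv ℝ (xi3s f) p v = -fderiv ℝ f p v / (2 * f p * √(f p)) :=
  fderiv_one_div_sqrt_apply hf hp v

theorem pdz_xi3s (hf : DifferentiableAt ℝ f p) (hp : 0 < f p) :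
    pdz (xi3s f) p = -pdz f p / (2 * f p * √(f p)) :=
  fderiv_xi3s_apply hf hp _

theorem pdz_xi3s_ne_zero_iff (hf : DifferentiableAt ℝ f p) (hp : 0 < f p) :
    pdz (xi3s f) p ≠ 0 ↔ pdz f p ≠ 0 := by
  have : 2 * f p * √(f p) ≠ 0 := by positivity
  simp [pdz_xi3s hf hp, this]

theorem deta_xi3s_zero_one (hf : DifferentiableAt ℝ f p) (hp : 0 < f p) :
    deta f zeroF zeroF (xi3s f) 0 1 p = pdy f p / (4 * f p * √(f p)) := by
  rw [deta_zero_one, etaV_xi3s_E_one, etaV_xi3s_E_zero, pdx_zero]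
  simp only [pdy, fderiv_xi3s_apply hf hp]
  ring

theorem deta_xi3s_zero_two (hf : DifferentiableAt ℝ f p) (hp : 0 < f p) :
    deta f zeroF zeroF (xi3s f) 0 2 p = (f p * pdx f p + pdz f p) / (4 * f p * √(f p)) := by
  have hs : √(f p) ≠ 0 := (Real.sqrt_pos.2 hp).ne'
  rw [deta_zero_two, etaV_xi3s_E_two, etaV_xi3s_E_zero]
  simp only [pdx, pdz, fderiv_sqrt_apply hf hp.ne', fderiv_xi3s_apply hf hp]
  field_simp
  ring

theorem deta_xi3s_one_two (hf : DifferentiableAt ℝ f p) (hp : 0 < f p) :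
    deta f zeroF zeroF (xi3s f) 1 2 p = pdy f p / (4 * √(f p)) := by
  rw [deta_one_two, etaV_xi3s_E_two, etaV_xi3s_E_one, pdz_zero]
  simp only [pdy, fderiv_sqrt_apply hf hp.ne']
  ring

theorem forall_deta_xi3s_eq_zero_iff (hf : DifferentiableAt ℝ f p) (hp : 0 < f p) :
    (∀ i j, deta f zeroF zeroF (xi3s f) i j p = 0) ↔
      pdy f p = 0 ∧ pdz f p = -(f p * pdx f p) := by
  have hs : 0 < √(f p) := Real.sqrt_pos.2 hp
  rw [forall_deta_eq_zero_iff, deta_xi3s_zero_one hf hp, deta_xi3s_zero_two hf hp,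
    deta_xi3s_one_two hf hp]
  simp only [div_eq_zero_iff, hs.ne', hp.ne', mul_eq_zero, OfNat.ofNat_ne_zero, or_false]
  constructor
  · rintro ⟨hy, hz, -⟩
    exact ⟨hy, by linarith⟩
  · rintro ⟨hy, hz⟩
    exact ⟨hy, by linarith, hy⟩

theorem deta_xi3s_eq_zero_iff (hf : Differentiable ℝ f) (hpos : ∀ p, 0 < f p) :
    (∀ i j p, deta f zeroF zeroF (xi3s f) i j p = 0) ↔
      (∀ p, pdy f p = 0) ∧ ∀ p, pdz f p = -(f p * pdx f p) := by
  simp only [← forall_and, ← forall_deta_xi3s_eq_zero_iff (hf _) (hpos _)]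
  exact ⟨fun h p i j => h i j p, fun h i j p => h p i j⟩

theorem contDiff_xi3s {n : WithTop ℕ∞} (hf : ContDiff ℝ n f) (hpos : ∀ p, 0 < f p) :
    ContDiff ℝ n (xi3s f) :=
  contDiff_const.div (hf.sqrt fun p => (hpos p).ne') fun p => (Real.sqrt_pos.2 (hpos p)).ne'

theorem not_forall_pdz_xi3s_eq_const (hf : Differentiable ℝ f) (hpos : ∀ p, 0 < f p) {c : ℝ}
    (hc : c ≠ 0) : ¬∀ p, pdz (xi3s f) p = c := by
  intro hconst
  obtain ⟨t, ht⟩ := exists_eq_zero_of_hasDerivAt_const hc fun t =>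
    hconst (0, 0, t) ▸ ((hf _).hasFDerivAt.one_div_sqrt (hpos _)).differentiableAt.hasDerivAt_pdz
  have : 0 < xi3s f (0, 0, t) := one_div_pos.2 (Real.sqrt_pos.2 (hpos _))
  exact this.ne' ht

end Xi3s

/-- Theorem 4.3(ii): the structure with `ξ₁ = ξ₂ = 0`, `ξ₃ = 1/√f` is almost
`α`-paracosymplectic iff `f_y ≡ 0` and `f_z = -f f_x` with `f_z` vanishing nowhere;
and it is never almost `α`-para-Kenmotsu. -/
theorem almost_alpha_paracosymplectic_iff (f : Pt → ℝ)
    (hf : ContDiff ℝ (⊤ : ℕ∞) f) (hfpos : ∀ p : Pt, 0 < f p) :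
    (((∀ (i j : Fin 3) (p : Pt), deta f zeroF zeroF (xi3s f) i j p = 0) ∧
        ∃ α : Pt → ℝ, ContDiff ℝ (⊤ : ℕ∞) α ∧ (∀ p : Pt, α p ≠ 0) ∧
          ∀ p : Pt, dPhi f zeroF zeroF (xi3s f) p =
            2 * α p * etaWedgePhi f zeroF zeroF (xi3s f) p) ↔
      ((∀ p : Pt, pdy f p = 0) ∧ (∀ p : Pt, pdz f p = -(f p * pdx f p)) ∧
        (∀ p : Pt, pdz f p ≠ 0))) ∧
    ¬ ∃ α : ℝ, α ≠ 0 ∧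
        (∀ (i j : Fin 3) (p : Pt), deta f zeroF zeroF (xi3s f) i j p = 0) ∧
        ∀ p : Pt, dPhi f zeroF zeroF (xi3s f) p =
          2 * α * etaWedgePhi f zeroF zeroF (xi3s f) p := by
  have hfd : Differentiable ℝ f := hf.differentiable (by simp)
  simp only [deta_xi3s_eq_zero_iff hfd hfpos, dPhi_xi3s_eq_two_mul_etaWedgePhi_iff (hfpos _)]
  refine ⟨⟨?_, ?_⟩, ?_⟩
  · rintro ⟨⟨hy, hz⟩, α, -, hα0, hα⟩
    refine ⟨hy, hz, fun p => (pdz_xi3s_ne_zero_iff (hfd p) (hfpos p)).1 ?_⟩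
    rw [hα p]
    exact mul_ne_zero two_ne_zero (hα0 p)
  · rintro ⟨hy, hz, hz0⟩
    refine ⟨⟨hy, hz⟩, fun p => pdz (xi3s f) p / 2,
      ((contDiff_xi3s hf hfpos).pdz (by exact_mod_cast le_top)).div_const 2, fun p => ?_,
      fun p => by ring⟩
    exact div_ne_zero ((pdz_xi3s_ne_zero_iff (hfd p) (hfpos p)).2 (hz0 p)) two_ne_zero
  · rintro ⟨α, hα, -, hconst⟩
    exact not_forall_pdz_xi3s_eq_const hfd hfpos (mul_ne_zero two_ne_zero hα) hconst
end

section
/- Consider the almost paracontact metric Walker structure on ℝ³ with ξ₂ ≡ −1, ξ₃ ≡ 0 and an arbitrary smooth function ξ₁ : ℝ³ → ℝ (so ξ = ξ₁∂x − ∂y, η = −dy + ξ₁ dz, φ∂x = ∂x, φ∂y = ξ₁∂x, φ∂z = f∂x − ξ₁∂y − ∂z). Then the structure is paracosymplectic, i.e. F(∂i,∂j,∂k) = 0 at every point for all coordinate fields (equivalently ∇φ = 0, the class G₀), if and only if (ξ₁)_x ≡ 0, (ξ₁)_y ≡ 0 and 2(ξ₁)_z + ξ₁ f_x − f_y ≡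 0 on ℝ³ (Theorem 4.5(ii)). -/
open Real

/-!
With `ξ₂ ≡ -1`, `ξ₃ ≡ 0` one has `φ∂x = ∂x`, `φ∂y = ξ₁∂x`, `φ∂z = f∂x - ξ₁∂y - ∂z`, and a direct
computation with the Walker connection gives `(∇_{∂i}φ)Y = aᵢ (Y₂ ∂x - Y₃ ∂y)` with
`a = ((ξ₁)_x, (ξ₁)_y, (ξ₁)_z + (ξ₁ f_x - f_y)/2)`. Since `g(∂x, ·) = dz` and `g(∂y, ·) = dy`,
this says `F(∂i, ·, ·) = aᵢ dy ∧ dz`, so `F ≡ 0` exactly when the three coefficients `aᵢ` vanish.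
-/

noncomputable def nablaPhi (f ξ₁ ξ₂ ξ₃ : Pt → ℝ) (X Y : VF) : VF := fun q =>
  cov f X (phiV f ξ₁ ξ₂ ξ₃ Y) q - phiV f ξ₁ ξ₂ ξ₃ (cov f X Y) q

theorem Ften_eq_gm_nablaPhi (f ξ₁ ξ₂ ξ₃ : Pt → ℝ) (X Y Z : VF) (p : Pt) :
    Ften f ξ₁ ξ₂ ξ₃ X Y Z p = gm f (nablaPhi f ξ₁ ξ₂ ξ₃ X Y) Z p :=
  rfl

theorem gm_of_c3_eq_zero (f : Pt → ℝ) {X : VF} (Y : VF) {p : Pt} (hX : c3 (X p) = 0) :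
    gm f X Y p = c1 (X p) * c3 (Y p) + c2 (X p) * c2 (Y p) := by
  simp only [gm, hX]
  ring

noncomputable def nablaPhiCoeff (f ξ₁ : Pt → ℝ) : Fin 3 → Pt → ℝ :=
  ![pdx ξ₁, pdy ξ₁, fun p => pdz ξ₁ p + (ξ₁ p * pdx f p - pdy f p) / 2]

theorem nablaPhi_E (f ξ₁ : Pt → ℝ) (i j : Fin 3) (p : Pt) :
    nablaPhi f ξ₁ negOneF zeroF (E i) (E j) p =
      (nablaPhiCoeff f ξ₁ i p * c2 (E j p), -(nablaPhiCoeff f ξ₁ i p * c3 (E j p)), 0) := by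
  fin_cases i <;> fin_cases j <;> refine Prod.ext ?_ (Prod.ext ?_ ?_) <;>
    simp [nablaPhi, cov, phiV, nablaPhiCoeff, E, dd, c1, c2, c3, negOneF, zeroF, pdx, pdy, pdz] <;>
    ring

theorem Ften_E (f ξ₁ : Pt → ℝ) (i j k : Fin 3) (p : Pt) :
    Ften f ξ₁ negOneF zeroF (E i) (E j) (E k) p =
      nablaPhiCoeff f ξ₁ i p * (c2 (E j p) * c3 (E k p) - c3 (E j p) * c2 (E k p)) := by
  rw [Ften_eq_gm_nablaPhi, gm_of_c3_eq_zero _ _ (by rw [nablaPhi_E]; rfl), nablaPhi_E]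
  simp only [c1, c2]
  ring

theorem forall_Ften_E_eq_zero_iff (f ξ₁ : Pt → ℝ) :
    (∀ (i j k : Fin 3) (p : Pt), Ften f ξ₁ negOneF zeroF (E i) (E j) (E k) p = 0) ↔
      ∀ (i : Fin 3) (p : Pt), nablaPhiCoeff f ξ₁ i p = 0 := by
  simp only [Ften_E]
  refine ⟨fun h i p => ?_, fun h i j k p => by rw [h, zero_mul]⟩
  simpa [E, c2, c3] using h i 1 2 p

theorem paracosymplectic_iff_neg_general (f ξ₁ : Pt → ℝ) :
    (∀ (i j k : Fin 3) (p : Pt), Ften f ξ₁ negOneF zeroF (E i) (E j) (E k) p = 0) ↔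
    ((∀ p : Pt, pdx ξ₁ p = 0) ∧ (∀ p : Pt, pdy ξ₁ p = 0) ∧
      (∀ p : Pt, 2 * pdz ξ₁ p + ξ₁ p * pdx f p - pdy f p = 0)) := by
  rw [forall_Ften_E_eq_zero_iff, Fin.forall_fin_succ, Fin.forall_fin_succ, Fin.forall_fin_one]
  refine and_congr Iff.rfl (and_congr Iff.rfl (forall_congr' fun p => ?_))
  change pdz ξ₁ p + (ξ₁ p * pdx f p - pdy f p) / 2 = 0 ↔ _
  constructor <;> intro h <;> linarith

/-- Theorem 4.5(ii): the structure with `ξ₂ ≡ -1`, `ξ₃ ≡ 0` is paracosymplectic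
(`F ≡ 0`, the class `G₀`) iff `(ξ₁)_x ≡ 0`, `(ξ₁)_y ≡ 0` and
`2(ξ₁)_z + ξ₁ f_x - f_y ≡ 0`. -/
theorem paracosymplectic_iff_neg (f ξ₁ : Pt → ℝ)
    (hf : ContDiff ℝ (⊤ : ℕ∞) f) (h1 : ContDiff ℝ (⊤ : ℕ∞) ξ₁) :
    (∀ (i j k : Fin 3) (p : Pt), Ften f ξ₁ negOneF zeroF (E i) (E j) (E k) p = 0) ↔
    ((∀ p : Pt, pdx ξ₁ p = 0) ∧ (∀ p : Pt, pdy ξ₁ p = 0) ∧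
      (∀ p : Pt, 2 * pdz ξ₁ p + ξ₁ p * pdx f p - pdy f p = 0)) :=
  paracosymplectic_iff_neg_general f ξ₁
end
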